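/- Let t ≠ {∅} be a full binary tree, and let u be the lexicographically maximal vertex of t with S_u(t) = S(t). Then u is an internal vertex of t (i.e., u1, u2 ∈ t), and S(t) = 2·min(S_{u1}(t), S_{u2}(t)) + 1[S_{u1}(t) > S_{u2}(t)] + 1. In particular, S(t) is even if and only if S_{u1}(t) > S_{u2}(t). -/

import Mathlib

/-- Words over the alphabet {1,2}, encoded as lists of booleans (`false` = 1, `true` = 2). -/
abbrev Word := List Bool

/-- Longest common prefix of two words (`u ∧ v`). -/
def lcp : Word → Word → Word
  | a :: as, b :: bs => if a = b then a :: lcp as bs else []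
  | _, _ => []

/-- The lexicographic (strict) order on words; a strict prefix is smaller. -/
def wlex (u v : Word) : Prop := List.Lex (· < ·) u v

/-- A binary tree: a finite, prefix-closed set of words containing the empty word. -/
def IsBinaryTree (t : Set Word) : Prop :=
  t.Finite ∧ ([] : Word) ∈ t ∧ ∀ u ∈ t, ∀ v : Word, v <+: u → v ∈ t

/-- Fullness: each vertex has either zero or two children. -/
def IsFull (t : Set Word) : Prop :=
  ∀ u ∈ t, (u ++ [false] ∈ t ↔ u ++ [true] ∈ t)

def IsFullBinaryTree (t : Set Word) : Prop := IsBinaryTree t ∧ IsFull t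

/-- `φ` is an embedding of `t` into `t'`: injective on `t`, strictly increasing for the
lexicographic order, and preserving longest common prefixes. -/
def IsEmbedding (t t' : Set Word) (φ : Word → Word) : Prop :=
  (∀ u ∈ t, φ u ∈ t') ∧
  (∀ u ∈ t, ∀ v ∈ t, u ≠ v → φ u ≠ φ v) ∧
  (∀ u ∈ t, ∀ v ∈ t, wlex u v → wlex (φ u) (φ v)) ∧
  (∀ u ∈ t, ∀ v ∈ t, φ (lcp u v) = lcp (φ u) (φ v))

/-- `t` can be embedded in `t'`. -/
def Embeds (t t' : Set Word) : Prop := ∃ φ, IsEmbedding t t' φ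

/-- `graft b t = b · t`, the copy of `t` rooted at the child `b` of the root. -/
def graft (b : Bool) (t : Set Word) : Set Word := (fun w => b :: w) '' t

/-- The interpolating trees: τ₀ = {∅}, τ₁ = {∅,1,2},
τ_{2m} = {∅} ∪ 1·τ_m ∪ 2·τ_{m-1}, τ_{2m+1} = {∅} ∪ 1·τ_m ∪ 2·τ_m (for m ≥ 1). -/
def tau : ℕ → Set Word
  | 0 => {[]}
  | 1 => {[], [false], [true]}
  | n + 2 => {[]} ∪ graft false (tau ((n + 2) / 2)) ∪ graft true (tau ((n + 1) / 2))
termination_by n => n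
decreasing_by all_goals omega

/-- The subtree of `t` rooted at `u`: θ_u t = {v : uv ∈ t}. -/
def subtreeAt (u : Word) (t : Set Word) : Set Word := {v | u ++ v ∈ t}

/-- The refined Horton–Strahler number S(t) = max {r : τ_r embeds in t}. -/
noncomputable def RHS (t : Set Word) : ℕ := sSup {r | Embeds (tau r) t}

/-- S_u(t) = S(θ_u t). -/
noncomputable def Sv (u : Word) (t : Set Word) : ℕ := RHS (subtreeAt u t)

/-- The set of internal vertices of `t` (those having a child in `t`). -/
def internals (t : Set Word) : Set Word :=
  {u | u ∈ t ∧ (u ++ [false] ∈ t ∨ u ++ [true] ∈ t)}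

/-!
Write `S = S(t) ≥ 1`. Since `τ_S = {∅} ∪ 1·τ_{⌊S/2⌋} ∪ 2·τ_{⌊(S-1)/2⌋}`, an embedding of `τ_S`
into `θ_u t` sends the root to some vertex `w` with the two halves embedded in `θ_{uw1} t` and
`θ_{uw2} t`; then `τ_S` also embeds in `θ_{uw} t`, so `S_{uw}(t) = S` and the lexicographic
maximality of `u` forces `w = ∅`. Hence `S_{u1}(t) ≥ ⌊S/2⌋` and `S_{u2}(t) ≥ ⌊(S-1)/2⌋`.
Conversely, for `N = 2·min(S_{u1}, S_{u2}) + 1[S_{u1} > S_{u2}] + 1` the halves of `τ_N` are small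
enough to embed at `u1` and `u2`, so `N ≤ S_u(t) = S`, and the three inequalities force `S = N`.
-/

lemma lcp_nil_left (v : Word) : lcp [] v = [] := by cases v <;> rfl

lemma lcp_nil_right (u : Word) : lcp u [] = [] := by cases u <;> rfl

lemma lcp_cons_cons (a b : Bool) (u v : Word) :
    lcp (a :: u) (b :: v) = if a = b then a :: lcp u v else [] := rfl

lemma lcp_append_append (p u v : Word) : lcp (p ++ u) (p ++ v) = p ++ lcp u v := by
  induction p with
  | nil => rfl
  | cons a p ih => simp [lcp_cons_cons, ih]

lemma wlex_append_append_iff (p : Word) {u v : Word} : wlex (p ++ u) (p ++ v) ↔ wlex u v := by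
  induction p with
  | nil => rfl
  | cons a p ih => exact List.lex_cons_iff.trans ih

lemma wlex_append_self (u : Word) {v : Word} (hv : v ≠ []) : wlex u (u ++ v) := by
  obtain ⟨a, v, rfl⟩ := List.exists_cons_of_ne_nil hv
  simpa using (wlex_append_append_iff u).2 (List.Lex.nil : wlex [] (a :: v))

lemma wlex_asymm {u v : Word} (h : wlex u v) : ¬wlex v u :=
  Std.Asymm.asymm (r := List.Lex (· < ·)) _ _ h

lemma lcp_append_prefix_of_wlex {v v' : Word} (h : wlex v v') (hv : lcp v v' ≠ v)
    (hv' : lcp v v' ≠ v') : lcp v v' ++ [false] <+: v ∧ lcp v v' ++ [true] <+: v' := by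
  induction h with
  | nil => exact absurd (lcp_nil_left _) hv
  | @rel a x b y hab =>
    obtain ⟨rfl, rfl⟩ : a = false ∧ b = true := by
      revert hab; cases a <;> cases b <;> decide
    simp [lcp_cons_cons]
  | @cons a x y _ ih =>
    simp only [lcp_cons_cons, if_true, ne_eq, List.cons.injEq, true_and] at hv hv' ⊢
    obtain ⟨h, h'⟩ := ih hv hv'
    exact ⟨(List.prefix_cons_inj a).2 h, (List.prefix_cons_inj a).2 h'⟩

lemma IsEmbedding.mono_left {s t t' : Set Word} {φ : Word → Word} (h : IsEmbedding t t' φ)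
    (hst : s ⊆ t) : IsEmbedding s t' φ :=
  ⟨fun u hu => h.1 u (hst hu),
   fun u hu v hv => h.2.1 u (hst hu) v (hst hv),
   fun u hu v hv => h.2.2.1 u (hst hu) v (hst hv),
   fun u hu v hv => h.2.2.2 u (hst hu) v (hst hv)⟩

lemma Embeds.mono_left {s t t' : Set Word} (h : Embeds t t') (hst : s ⊆ t) : Embeds s t' :=
  let ⟨φ, hφ⟩ := h; ⟨φ, hφ.mono_left hst⟩

lemma embeds_of_subset {s t : Set Word} (hst : s ⊆ t) : Embeds s t :=
  ⟨id, hst, fun _ _ _ _ h => h, fun _ _ _ _ h => h, fun _ _ _ _ => rfl⟩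

lemma IsEmbedding.encard_le {s t : Set Word} {φ : Word → Word} (h : IsEmbedding s t φ) :
    s.encard ≤ t.encard :=
  Set.encard_le_encard_of_injOn h.1 fun u hu v hv huv =>
    by_contra fun hne => h.2.1 u hu v hv hne huv

lemma IsEmbedding.comp_cons {b : Bool} {s t : Set Word} {φ : Word → Word}
    (h : IsEmbedding (graft b s) t φ) : IsEmbedding s t (fun x => φ (b :: x)) := by
  obtain ⟨hmem, hinj, hlex, hlcp⟩ := h
  have hs : ∀ x ∈ s, b :: x ∈ graft b s := fun x hx => ⟨x, hx, rfl⟩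
  refine ⟨fun x hx => hmem _ (hs x hx), fun x hx y hy hxy => ?_, fun x hx y hy hxy => ?_,
    fun x hx y hy => ?_⟩
  · exact hinj _ (hs x hx) _ (hs y hy) (by simpa using hxy)
  · exact hlex _ (hs x hx) _ (hs y hy) (List.lex_cons_iff.2 hxy)
  · simpa [lcp_cons_cons] using hlcp _ (hs x hx) _ (hs y hy)

lemma Embeds.of_subtreeAt {s t : Set Word} {p : Word} (h : Embeds s (subtreeAt p t)) :
    Embeds s t := by
  obtain ⟨ψ, hmem, hinj, hlex, hlcp⟩ := h
  refine ⟨fun x => p ++ ψ x, hmem, fun x hx y hy hxy => ?_, fun x hx y hy hxy => ?_,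
    fun x hx y hy => ?_⟩
  · simpa using hinj x hx y hy hxy
  · exact (wlex_append_append_iff p).2 (hlex x hx y hy hxy)
  · simp only [hlcp x hx y hy, lcp_append_append]

lemma IsEmbedding.embeds_subtreeAt {s t : Set Word} {χ : Word → Word} {p : Word}
    (h : IsEmbedding s t χ) (hp : ∀ x ∈ s, p <+: χ x) : Embeds s (subtreeAt p t) := by
  obtain ⟨hmem, hinj, hlex, hlcp⟩ := h
  have hχ : ∀ x ∈ s, χ x = p ++ (χ x).drop p.length :=
    fun x hx => (List.prefix_iff_eq_append.1 (hp x hx)).symm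
  refine ⟨fun x => (χ x).drop p.length, fun x hx => ?_, fun x hx y hy hxy => ?_,
    fun x hx y hy hxy => ?_, fun x hx y hy => ?_⟩
  · simpa [subtreeAt, ← hχ x hx] using hmem x hx
  · intro heq
    exact hinj x hx y hy hxy (by rw [hχ x hx, hχ y hy]; exact congrArg (p ++ ·) heq)
  · have := hlex x hx y hy hxy
    rwa [hχ x hx, hχ y hy, wlex_append_append_iff] at this
  · dsimp only
    conv_lhs => rw [hlcp x hx y hy, hχ x hx, hχ y hy, lcp_append_append, List.drop_left]

def node (s₁ s₂ : Set Word) : Set Word := {[]} ∪ graft false s₁ ∪ graft true s₂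

section node

variable {s₁ s₂ t : Set Word}

@[simp] lemma nil_mem_node : [] ∈ node s₁ s₂ := by simp [node]

@[simp] lemma false_cons_mem_node {x : Word} : false :: x ∈ node s₁ s₂ ↔ x ∈ s₁ := by
  simp [node, graft]

@[simp] lemma true_cons_mem_node {x : Word} : true :: x ∈ node s₁ s₂ ↔ x ∈ s₂ := by
  simp [node, graft]

lemma graft_subset_node_false : graft false s₁ ⊆ node s₁ s₂ := by
  rintro _ ⟨x, hx, rfl⟩; simpa using hx

lemma graft_subset_node_true : graft true s₂ ⊆ node s₁ s₂ := by
  rintro _ ⟨x, hx, rfl⟩; simpa using hx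

lemma node_mono {t₁ t₂ : Set Word} (h₁ : s₁ ⊆ t₁) (h₂ : s₂ ⊆ t₂) : node s₁ s₂ ⊆ node t₁ t₂ :=
  Set.union_subset_union (Set.union_subset_union_right _ (Set.image_mono h₁)) (Set.image_mono h₂)

lemma encard_graft (b : Bool) (s : Set Word) : (graft b s).encard = s.encard :=
  List.cons_injective.encard_image s

lemma encard_node : (node s₁ s₂).encard = 1 + s₁.encard + s₂.encard := by
  have h₁ : Disjoint ({[]} : Set Word) (graft false s₁) := by
    simp [graft]
  have h₂ : Disjoint ({[]} ∪ graft false s₁) (graft true s₂) := by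
    simp [Set.disjoint_left, graft]
  rw [node, Set.encard_union_eq h₂, Set.encard_union_eq h₁, Set.encard_singleton, encard_graft,
    encard_graft]

def nodeMap (ψ₁ ψ₂ : Word → Word) : Word → Word
  | [] => []
  | false :: x => false :: ψ₁ x
  | true :: x => true :: ψ₂ x

lemma embeds_node (h : [] ∈ t) (h₁ : Embeds s₁ (subtreeAt [false] t))
    (h₂ : Embeds s₂ (subtreeAt [true] t)) : Embeds (node s₁ s₂) t := by
  obtain ⟨ψ₁, hmem₁, hinj₁, hlex₁, hlcp₁⟩ := h₁
  obtain ⟨ψ₂, hmem₂, hinj₂, hlex₂, hlcp₂⟩ := h₂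
  refine ⟨nodeMap ψ₁ ψ₂, ?_, ?_, ?_, ?_⟩
  · rintro (_ | ⟨_ | _, x⟩) hx
    · exact h
    · exact hmem₁ x (by simpa using hx)
    · exact hmem₂ x (by simpa using hx)
  · rintro (_ | ⟨_ | _, x⟩) hx (_ | ⟨_ | _, y⟩) hy hxy <;> simp_all [nodeMap]
  · rintro (_ | ⟨_ | _, x⟩) hx (_ | ⟨_ | _, y⟩) hy hxy <;>
      simp_all [nodeMap, wlex, List.cons_lex_cons_iff]
  · rintro (_ | ⟨_ | _, x⟩) hx (_ | ⟨_ | _, y⟩) hy <;>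
      simp_all [nodeMap, lcp_nil_left, lcp_nil_right, lcp_cons_cons]

lemma exists_embeds_subtreeAt_of_embeds_node (h : Embeds (node s₁ s₂) t) (h₁ : [] ∈ s₁)
    (h₂ : [] ∈ s₂) :
    ∃ w ∈ t, Embeds s₁ (subtreeAt (w ++ [false]) t) ∧ Embeds s₂ (subtreeAt (w ++ [true]) t) := by
  obtain ⟨φ, hφ⟩ := h
  have ⟨hmem, hinj, hlex, hlcp⟩ := hφ
  have branch : ∀ x ∈ s₁, ∀ y ∈ s₂,
      φ [] ++ [false] <+: φ (false :: x) ∧ φ [] ++ [true] <+: φ (true :: y) := by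
    intro x hx y hy
    have hx' : false :: x ∈ node s₁ s₂ := by simpa using hx
    have hy' : true :: y ∈ node s₁ s₂ := by simpa using hy
    have hw : lcp (φ (false :: x)) (φ (true :: y)) = φ [] := by
      rw [← hlcp _ hx' _ hy', lcp_cons_cons, if_neg Bool.false_ne_true]
    rw [← hw]
    refine lcp_append_prefix_of_wlex (hlex _ hx' _ hy' (List.Lex.rel (by decide))) ?_ ?_ <;>
      rw [hw] <;> exact hinj _ nil_mem_node _ ‹_› (by simp)
  exact ⟨φ [], hmem _ nil_mem_node,
    (hφ.mono_left graft_subset_node_false).comp_cons.embeds_subtreeAt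
      fun x hx => (branch x hx [] h₂).1,
    (hφ.mono_left graft_subset_node_true).comp_cons.embeds_subtreeAt
      fun y hy => (branch [] h₁ y hy).2⟩

end node

lemma tau_eq_node {r : ℕ} (hr : 1 ≤ r) : tau r = node (tau (r / 2)) (tau ((r - 1) / 2)) := by
  obtain _ | _ | n := r
  · omega
  · show tau 1 = node (tau 0) (tau 0)
    ext w
    simp [tau, node, graft]
    tauto
  · rw [tau]; rfl

@[simp] lemma nil_mem_tau (r : ℕ) : [] ∈ tau r := by
  obtain _ | r := r
  · simp [tau]
  · simp [tau_eq_node (Nat.succ_pos r)]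

lemma tau_mono {m n : ℕ} (h : m ≤ n) : tau m ⊆ tau n := by
  induction n using Nat.strong_induction_on generalizing m with
  | _ n ih =>
    obtain rfl | hm := Nat.eq_zero_or_pos m
    · simp [tau]
    · rw [tau_eq_node hm, tau_eq_node (hm.trans_le h)]
      exact node_mono (ih _ (by omega) (by omega)) (ih _ (by omega) (by omega))

lemma add_one_le_encard_tau (r : ℕ) : (r + 1 : ℕ∞) ≤ (tau r).encard := by
  induction r using Nat.strong_induction_on with
  | _ r ih =>
    obtain rfl | hr := Nat.eq_zero_or_pos r
    · simp [tau]
    · rw [tau_eq_node hr, encard_node]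
      calc (r + 1 : ℕ∞) ≤ ((1 + (r / 2 + 1) + ((r - 1) / 2 + 1) : ℕ) : ℕ∞) := by
            exact_mod_cast (by omega)
        _ ≤ 1 + (tau (r / 2)).encard + (tau ((r - 1) / 2)).encard := by
            push_cast
            gcongr
            exacts [ih _ (by omega), ih _ (by omega)]

section rhs

variable {t : Set Word}

lemma lt_ncard_of_embeds_tau {r : ℕ} (ht : t.Finite) (h : Embeds (tau r) t) : r < t.ncard := by
  obtain ⟨φ, hφ⟩ := h
  have := (add_one_le_encard_tau r).trans hφ.encard_le
  rw [← ht.cast_ncard_eq] at this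
  exact_mod_cast this

lemma bddAbove_embeds_tau (ht : t.Finite) : BddAbove {r | Embeds (tau r) t} :=
  ⟨t.ncard, fun _ hr => (lt_ncard_of_embeds_tau ht hr).le⟩

lemma le_rhs {r : ℕ} (ht : t.Finite) (h : Embeds (tau r) t) : r ≤ RHS t :=
  le_csSup (bddAbove_embeds_tau ht) h

lemma embeds_tau_iff_le_rhs {r : ℕ} (ht : t.Finite) (h : [] ∈ t) :
    Embeds (tau r) t ↔ r ≤ RHS t := by
  refine ⟨le_rhs ht, fun hr => Embeds.mono_left ?_ (tau_mono hr)⟩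
  exact Nat.sSup_mem ⟨0, embeds_of_subset (by simpa [tau] using h)⟩ (bddAbove_embeds_tau ht)

lemma Set.Finite.subtreeAt (ht : t.Finite) (u : Word) : (subtreeAt u t).Finite :=
  ht.preimage fun _ _ _ _ h => List.append_cancel_left h

lemma subtreeAt_subtreeAt (u v : Word) : subtreeAt v (subtreeAt u t) = subtreeAt (u ++ v) t := by
  ext; simp [subtreeAt]

lemma rhs_subtreeAt_le (ht : t.Finite) (u : Word) : RHS (subtreeAt u t) ≤ RHS t :=
  csSup_le_csSup' (bddAbove_embeds_tau ht) fun _ hr => hr.of_subtreeAt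

end rhs

section tree

variable {t : Set Word} {u : Word}

lemma embeds_tau_iff_le_sv {r : ℕ} (ht : t.Finite) (hu : u ∈ t) :
    Embeds (tau r) (subtreeAt u t) ↔ r ≤ Sv u t :=
  embeds_tau_iff_le_rhs (ht.subtreeAt u) (by simpa [subtreeAt])

lemma mem_of_embeds_subtreeAt {s : Set Word} (hpc : ∀ w ∈ t, ∀ v : Word, v <+: w → v ∈ t)
    (h : Embeds s (subtreeAt u t)) (hs : s.Nonempty) : u ∈ t := by
  obtain ⟨φ, hmem, -⟩ := h
  obtain ⟨x, hx⟩ := hs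
  exact hpc _ (hmem x hx) u (List.prefix_append _ _)

lemma IsFullBinaryTree.one_le_rhs (ht : IsFullBinaryTree t) (hne : t ≠ {[]}) : 1 ≤ RHS t := by
  obtain ⟨⟨hfin, hnil, hpc⟩, hfull⟩ := ht
  obtain ⟨x, hx, hx0⟩ : ∃ x ∈ t, x ≠ [] := by
    by_contra! h
    exact hne (Set.eq_singleton_iff_unique_mem.2 ⟨hnil, h⟩)
  obtain ⟨c, x, rfl⟩ := List.exists_cons_of_ne_nil hx0
  have hc : [c] ∈ t := hpc _ hx _ ⟨x, rfl⟩
  have hroot : [false] ∈ t ∧ [true] ∈ t := by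
    have := hfull [] hnil
    cases c <;> simp_all
  refine le_rhs hfin (embeds_of_subset ?_)
  rintro w hw
  simp only [tau, Set.mem_insert_iff, Set.mem_singleton_iff] at hw
  rcases hw with rfl | rfl | rfl <;> simp_all

lemma le_sv_of_children (ht : t.Finite) (hu : u ∈ t) (h₁ : u ++ [false] ∈ t)
    (h₂ : u ++ [true] ∈ t) :
    2 * min (Sv (u ++ [false]) t) (Sv (u ++ [true]) t) +
      (if Sv (u ++ [true]) t < Sv (u ++ [false]) t then 1 else 0) + 1 ≤ Sv u t := by
  rw [← embeds_tau_iff_le_sv ht hu, tau_eq_node (by omega)]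
  refine embeds_node (by simpa [subtreeAt]) ?_ ?_ <;>
    rw [subtreeAt_subtreeAt, embeds_tau_iff_le_sv ht ‹_›] <;> split_ifs <;> omega

lemma embeds_tau_half_of_lexmax (ht : t.Finite) (hu : u ∈ t) (hS : 1 ≤ RHS t)
    (humax : Sv u t = RHS t) (hlexmax : ∀ w ∈ t, Sv w t = RHS t → w = u ∨ wlex w u) :
    Embeds (tau (RHS t / 2)) (subtreeAt (u ++ [false]) t) ∧
      Embeds (tau ((RHS t - 1) / 2)) (subtreeAt (u ++ [true]) t) := by
  have hemb : Embeds (node (tau (RHS t / 2)) (tau ((RHS t - 1) / 2))) (subtreeAt u t) := by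
    rw [← tau_eq_node hS, embeds_tau_iff_le_sv ht hu]
    exact humax.ge
  obtain ⟨w, hw, e₁, e₂⟩ :=
    exists_embeds_subtreeAt_of_embeds_node hemb (nil_mem_tau _) (nil_mem_tau _)
  simp only [subtreeAt_subtreeAt] at e₁ e₂
  have hSw : Sv (u ++ w) t = RHS t := by
    refine le_antisymm (rhs_subtreeAt_le ht _) ?_
    rw [← embeds_tau_iff_le_sv ht hw, tau_eq_node hS]
    refine embeds_node (by simpa [subtreeAt] using hw) ?_ ?_ <;> simpa [subtreeAt_subtreeAt]
  obtain rfl : w = [] := by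
    by_contra hw0
    rcases hlexmax _ hw hSw with h | h
    · exact hw0 (by simpa using h)
    · exact wlex_asymm h (wlex_append_self u hw0)
  simpa using ⟨e₁, e₂⟩

end tree

/-- Let `t ≠ {∅}` be a full binary tree and let `u` be the lexicographically maximal vertex with
`S_u(t) = S(t)`. Then `u` is internal (`u1, u2 ∈ t`),
`S(t) = 2·min(S_{u1}(t), S_{u2}(t)) + 1[S_{u1}(t) > S_{u2}(t)] + 1`, and `S(t)` is even iff
`S_{u1}(t) > S_{u2}(t)`. -/
theorem rhs_at_lexmax_vertex (t : Set Word) (u : Word)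
    (ht : IsFullBinaryTree t) (hne : t ≠ {([] : Word)})
    (hu : u ∈ t) (humax : Sv u t = RHS t)
    (hlexmax : ∀ w ∈ t, Sv w t = RHS t → w = u ∨ wlex w u) :
    u ++ [false] ∈ t ∧ u ++ [true] ∈ t ∧
    RHS t = 2 * min (Sv (u ++ [false]) t) (Sv (u ++ [true]) t) +
      (if Sv (u ++ [true]) t < Sv (u ++ [false]) t then 1 else 0) + 1 ∧
    (RHS t % 2 = 0 ↔ Sv (u ++ [true]) t < Sv (u ++ [false]) t) := by
  have hS := ht.one_le_rhs hne
  obtain ⟨⟨hfin, -, hpc⟩, -⟩ := ht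
  obtain ⟨e₁, e₂⟩ := embeds_tau_half_of_lexmax hfin hu hS humax hlexmax
  have h₁ := mem_of_embeds_subtreeAt hpc e₁ ⟨[], nil_mem_tau _⟩
  have h₂ := mem_of_embeds_subtreeAt hpc e₂ ⟨[], nil_mem_tau _⟩
  have ha := (embeds_tau_iff_le_sv hfin h₁).1 e₁
  have hb := (embeds_tau_iff_le_sv hfin h₂).1 e₂
  have hlow := humax ▸ le_sv_of_children hfin hu h₁ h₂
  refine ⟨h₁, h₂, ?_⟩
  split_ifs at hlow ⊢ <;> omega
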